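/- arXiv:2107.05040 — 7 statements merged into one kernel-verified Lean document; each statement's English description precedes it below -/
import Mathlib

section
/- Let d ≥ 1, let A be a symmetric positive semidefinite d×d real matrix, let f(x) = (1/2)⟨x, A x⟩, and let X : (0,∞) → ℝ^d be a twice continuously differentiable solution of Nesterov's ODE with vanishing damping, Ẍ(t) + (3/t)Ẋ(t) + A X(t) = 0. Then for every t₁ > 0 there exists T > 0 such that for every t₂ with t₁ < t₂ ≤ t₁ + T and every continuously differentiable curve Y : [t₁,t₂] → ℝ^d with Y(t₁) = X(t₁) and Y(t₂) = X(t₂), one has J[Y] ≥ J[X], where J[Y] = ∫_{t₁}^{t₂} t³( (1/2)‖Ẏ(t)‖² − f(Y(t)) ) dt. -/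
open scoped RealInnerProductSpace
open Set

/-- The action functional with vanishing damping `3/t` on `[t₁, t₂]` for the quadratic loss
`f(x) = (1/2)⟨x, A x⟩`, evaluated on a curve `Y` with derivative `Y'`. -/
noncomputable def nesterovAction (d : ℕ) (A : Matrix (Fin d) (Fin d) ℝ) (t₁ t₂ : ℝ)
    (Y Y' : ℝ → EuclideanSpace ℝ (Fin d)) : ℝ :=
  ∫ t in t₁..t₂, t ^ 3 *
    ((1 / 2) * ‖Y' t‖ ^ 2 - (1 / 2) * ⟪Y t, Matrix.toEuclideanLin A (Y t)⟫)

/-!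
Write `Y = X + h` with `h` vanishing at both ends. For a symmetric `A` the action splits as
`J[Y] - J[X] = ∫ t³ (⟪Ẋ, ḣ⟫ - ⟪h, A X⟫) + J[h]`. The ODE says exactly `(t³ Ẋ)' = -t³ A X`,
so the first integral is the boundary term `[t³ ⟪Ẋ, h⟫]`, which vanishes. For `J[h]`,
Cauchy–Schwarz gives `‖h t‖² ≤ (t₂ - t₁) ∫ ‖ḣ‖²`, so the potential part of `J[h]` is at most
`‖A‖ t₂³ (t₂ - t₁)² ∫ ‖ḣ‖² / 2`, while its kinetic part is at least `t₁³ ∫ ‖ḣ‖² / 2`;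
the latter wins when `t₂` is close to `t₁`.
-/

open MeasureTheory

theorem sq_intervalIntegral_le {a b : ℝ} (hab : a ≤ b) {g : ℝ → ℝ}
    (hg : ContinuousOn g (Icc a b)) :
    (∫ t in a..b, g t) ^ 2 ≤ (b - a) * ∫ t in a..b, g t ^ 2 := by
  rcases hab.eq_or_lt with rfl | hlt
  · simp
  have hg1 : IntervalIntegrable g volume a b := hg.intervalIntegrable_of_Icc hab
  have hg2 : IntervalIntegrable (fun t => g t ^ 2) volume a b :=
    (hg.pow 2).intervalIntegrable_of_Icc hab
  generalize hM : ∫ t in a..b, g t = M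
  generalize hQ : ∫ t in a..b, g t ^ 2 = Q
  have hexpand : ∫ t in a..b, ((b - a) * g t - M) ^ 2 = (b - a) * ((b - a) * Q - M ^ 2) := by
    have hpt : (fun t => ((b - a) * g t - M) ^ 2) =
        fun t => (b - a) ^ 2 * g t ^ 2 - 2 * (b - a) * M * g t + M ^ 2 := by
      funext t; ring
    rw [hpt, intervalIntegral.integral_add ((hg2.const_mul _).sub (hg1.const_mul _))
        intervalIntegrable_const, intervalIntegral.integral_sub (hg2.const_mul _)
        (hg1.const_mul _), intervalIntegral.integral_const_mul,
      intervalIntegral.integral_const_mul, intervalIntegral.integral_const, smul_eq_mul, hM, hQ]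
    ring
  have hnonneg : 0 ≤ ∫ t in a..b, ((b - a) * g t - M) ^ 2 :=
    intervalIntegral.integral_nonneg hab fun _ _ => sq_nonneg _
  rw [hexpand] at hnonneg
  linarith [(mul_nonneg_iff_of_pos_left (sub_pos.mpr hlt)).mp hnonneg]

theorem HasDerivAt.cube_smul_of_vanishing_damping {E : Type*} [NormedAddCommGroup E]
    [NormedSpace ℝ E] {V : ℝ → E} {t : ℝ} {V' g : E} (hV : HasDerivAt V V' t)
    (hODE : V' + (3 / t) • V t + g = 0) :
    HasDerivAt (fun s => s ^ 3 • V s) (-(t ^ 3 • g)) t := by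
  refine ((hasDerivAt_pow 3 t).smul hV).congr_deriv ?_
  have : V' = -((3 / t) • V t) - g := by rw [← sub_eq_zero, ← hODE]; abel
  rw [this, smul_sub, smul_neg, smul_smul, Nat.cast_ofNat]
  -- true at `t = 0` as well, where `3 / t = 0`
  have : t ^ 3 * (3 / t) = 3 * t ^ (3 - 1) := by field_simp
  rw [this]; abel

theorem norm_sq_le_mul_integral_norm_deriv_sq {E : Type*} [NormedAddCommGroup E]
    [InnerProductSpace ℝ E] [CompleteSpace E] {a b : ℝ} {h h' : ℝ → E}
    (hh : ∀ t ∈ Icc a b, HasDerivWithinAt h (h' t) (Icc a b) t) (hh' : ContinuousOn h' (Icc a b))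
    (ha : h a = 0) {t : ℝ} (ht : t ∈ Icc a b) :
    ‖h t‖ ^ 2 ≤ (b - a) * ∫ s in a..b, ‖h' s‖ ^ 2 := by
  have hsub : Icc a t ⊆ Icc a b := Icc_subset_Icc_right ht.2
  have hFTC : ∫ s in a..t, h' s = h t := by
    rw [intervalIntegral.integral_eq_sub_of_hasDerivAt_of_le ht.1
      (fun s hs => (hh s (hsub hs)).continuousWithinAt.mono hsub)
      (fun s hs => (hh s (hsub (Ioo_subset_Icc_self hs))).hasDerivAt
        (Icc_mem_nhds hs.1 (hs.2.trans_le ht.2)))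
      ((hh'.mono hsub).intervalIntegrable_of_Icc ht.1), ha, sub_zero]
  calc ‖h t‖ ^ 2 = ‖∫ s in a..t, h' s‖ ^ 2 := by rw [hFTC]
    _ ≤ (∫ s in a..t, ‖h' s‖) ^ 2 := by
      gcongr; exact intervalIntegral.norm_integral_le_integral_norm ht.1
    _ ≤ (t - a) * ∫ s in a..t, ‖h' s‖ ^ 2 := sq_intervalIntegral_le ht.1 (hh'.mono hsub).norm
    _ ≤ (b - a) * ∫ s in a..b, ‖h' s‖ ^ 2 := by
      refine mul_le_mul (by linarith [ht.2]) ?_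
        (intervalIntegral.integral_nonneg ht.1 fun _ _ => sq_nonneg _) (by linarith [ht.1, ht.2])
      exact intervalIntegral.integral_mono_interval le_rfl ht.1 ht.2
          (Filter.Eventually.of_forall fun _ => sq_nonneg _)
          ((hh'.norm.pow 2).intervalIntegrable_of_Icc (ht.1.trans ht.2))

namespace VanishingDamping

variable {E : Type*} [NormedAddCommGroup E] [InnerProductSpace ℝ E]

noncomputable def lagrangian (L : E →L[ℝ] E) (x v : E) : ℝ :=
  (1 / 2) * ‖v‖ ^ 2 - (1 / 2) * ⟪x, L x⟫

theorem lagrangian_add_sub (L : E →L[ℝ] E) (hL : (L : E →ₗ[ℝ] E).IsSymmetric)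
    (x v u w : E) :
    lagrangian L (x + u) (v + w) - lagrangian L x v =
      (⟪v, w⟫ - ⟪u, L x⟫) + lagrangian L u w := by
  have hux : ⟪x, L u⟫ = ⟪u, L x⟫ := by rw [real_inner_comm]; exact hL u x
  simp only [lagrangian, map_add, inner_add_left, inner_add_right, norm_add_sq_real, hux]
  ring

variable {L : E →L[ℝ] E} {a b : ℝ} {X X' X'' h h' : ℝ → E}

theorem continuousOn_lagrangian {s : Set ℝ} (hX : ContinuousOn X s) (hX' : ContinuousOn X' s) :
    ContinuousOn (fun t => lagrangian L (X t) (X' t)) s :=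
  (continuousOn_const.mul (hX'.norm.pow 2)).sub
    (continuousOn_const.mul (hX.inner (L.continuous.comp_continuousOn hX)))

theorem integral_first_variation_eq_zero (hab : a ≤ b)
    (hX : ∀ t ∈ Icc a b, HasDerivAt X (X' t) t) (hX' : ∀ t ∈ Icc a b, HasDerivAt X' (X'' t) t)
    (hODE : ∀ t ∈ Icc a b, X'' t + (3 / t) • X' t + L (X t) = 0)
    (hh : ∀ t ∈ Icc a b, HasDerivWithinAt h (h' t) (Icc a b) t) (hh' : ContinuousOn h' (Icc a b))
    (ha0 : h a = 0) (hb0 : h b = 0) :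
    ∫ t in a..b, t ^ 3 * (⟪X' t, h' t⟫ - ⟪h t, L (X t)⟫) = 0 := by
  have hXc : ContinuousOn X (Icc a b) := fun t ht =>
    (hX t ht).continuousAt.continuousWithinAt
  have hX'c : ContinuousOn X' (Icc a b) := fun t ht =>
    (hX' t ht).continuousAt.continuousWithinAt
  have hhc : ContinuousOn h (Icc a b) := fun t ht => (hh t ht).continuousWithinAt
  have hderiv : ∀ t ∈ Ioo a b, HasDerivAt (fun s => ⟪s ^ 3 • X' s, h s⟫)
      (t ^ 3 * (⟪X' t, h' t⟫ - ⟪h t, L (X t)⟫)) t := by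
    intro t ht
    have hmom := (hX' t (Ioo_subset_Icc_self ht)).cube_smul_of_vanishing_damping
      (hODE t (Ioo_subset_Icc_self ht))
    refine (hmom.inner ℝ ((hh t (Ioo_subset_Icc_self ht)).hasDerivAt
      (Icc_mem_nhds ht.1 ht.2))).congr_deriv ?_
    rw [inner_neg_left, real_inner_smul_left, real_inner_smul_left, real_inner_comm (L (X t))]
    ring
  rw [intervalIntegral.integral_eq_sub_of_hasDerivAt_of_le hab
    (((continuousOn_id.pow 3).smul hX'c).inner hhc) hderiv]
  · simp [ha0, hb0]
  · exact ((continuousOn_id.pow 3).mul ((hX'c.inner hh').sub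
      (hhc.inner (L.continuous.comp_continuousOn hXc)))).intervalIntegrable_of_Icc hab

variable [CompleteSpace E]

theorem integral_lagrangian_nonneg_of_short (ha : 0 < a) (hab : a ≤ b)
    (hshort : ‖L‖ * b ^ 3 * (b - a) ^ 2 ≤ a ^ 3)
    (hh : ∀ t ∈ Icc a b, HasDerivWithinAt h (h' t) (Icc a b) t) (hh' : ContinuousOn h' (Icc a b))
    (ha0 : h a = 0) :
    0 ≤ ∫ t in a..b, t ^ 3 * lagrangian L (h t) (h' t) := by
  have hhc : ContinuousOn h (Icc a b) := fun t ht => (hh t ht).continuousWithinAt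
  set Q := ∫ t in a..b, ‖h' t‖ ^ 2
  have hQ : 0 ≤ Q := intervalIntegral.integral_nonneg hab fun _ _ => sq_nonneg _
  have hpt : ∀ t ∈ Icc a b,
      (1 / 2) * (a ^ 3 * ‖h' t‖ ^ 2 - ‖L‖ * b ^ 3 * (b - a) * Q) ≤
        t ^ 3 * lagrangian L (h t) (h' t) := by
    intro t ht
    have hquad : ⟪h t, L (h t)⟫ ≤ ‖L‖ * ((b - a) * Q) := calc
      ⟪h t, L (h t)⟫ ≤ ‖h t‖ * (‖L‖ * ‖h t‖) :=
        (real_inner_le_norm _ _).trans (by gcongr; exact L.le_opNorm _)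
      _ = ‖L‖ * ‖h t‖ ^ 2 := by ring
      _ ≤ ‖L‖ * ((b - a) * Q) := by
        gcongr; exact norm_sq_le_mul_integral_norm_deriv_sq hh hh' ha0 ht
    have hat : a ^ 3 ≤ t ^ 3 := pow_le_pow_left₀ ha.le ht.1 3
    have htb : t ^ 3 ≤ b ^ 3 := pow_le_pow_left₀ (ha.le.trans ht.1) ht.2 3
    have : 0 ≤ ‖L‖ * ((b - a) * Q) := by have := sub_nonneg.mpr hab; positivity
    unfold lagrangian
    nlinarith [sq_nonneg ‖h' t‖, pow_pos (ha.trans_le ht.1) 3]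
  have hQint : IntervalIntegrable (fun t => ‖h' t‖ ^ 2) volume a b :=
    (hh'.norm.pow 2).intervalIntegrable_of_Icc hab
  have hconst : ∫ t in a..b, (1 / 2) * (a ^ 3 * ‖h' t‖ ^ 2 - ‖L‖ * b ^ 3 * (b - a) * Q) =
      (1 / 2) * (a ^ 3 - ‖L‖ * b ^ 3 * (b - a) ^ 2) * Q := by
    rw [intervalIntegral.integral_const_mul, intervalIntegral.integral_sub
      (hQint.const_mul _) intervalIntegrable_const,
      intervalIntegral.integral_const_mul, intervalIntegral.integral_const, smul_eq_mul]
    ring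
  calc 0 ≤ (1 / 2) * (a ^ 3 - ‖L‖ * b ^ 3 * (b - a) ^ 2) * Q := by
        have := sub_nonneg.mpr hshort; positivity
    _ = _ := hconst.symm
    _ ≤ _ := intervalIntegral.integral_mono_on hab
      (((hQint.const_mul _).sub intervalIntegrable_const).const_mul _)
      (((continuousOn_id.pow 3).mul (continuousOn_lagrangian hhc hh')).intervalIntegrable_of_Icc
        hab)
      hpt

theorem integral_lagrangian_le_of_short (hL : (L : E →ₗ[ℝ] E).IsSymmetric) (ha : 0 < a)
    (hab : a ≤ b)
    (hshort : ‖L‖ * b ^ 3 * (b - a) ^ 2 ≤ a ^ 3)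
    (hX : ∀ t ∈ Icc a b, HasDerivAt X (X' t) t) (hX' : ∀ t ∈ Icc a b, HasDerivAt X' (X'' t) t)
    (hODE : ∀ t ∈ Icc a b, X'' t + (3 / t) • X' t + L (X t) = 0) {Y Y' : ℝ → E}
    (hY : ∀ t ∈ Icc a b, HasDerivWithinAt Y (Y' t) (Icc a b) t) (hY' : ContinuousOn Y' (Icc a b))
    (hYa : Y a = X a) (hYb : Y b = X b) :
    ∫ t in a..b, t ^ 3 * lagrangian L (X t) (X' t) ≤
      ∫ t in a..b, t ^ 3 * lagrangian L (Y t) (Y' t) := by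
  have hXc : ContinuousOn X (Icc a b) := fun t ht =>
    (hX t ht).continuousAt.continuousWithinAt
  have hX'c : ContinuousOn X' (Icc a b) := fun t ht =>
    (hX' t ht).continuousAt.continuousWithinAt
  have hYc : ContinuousOn Y (Icc a b) := fun t ht => (hY t ht).continuousWithinAt
  have hh : ∀ t ∈ Icc a b, HasDerivWithinAt (fun s => Y s - X s) (Y' t - X' t) (Icc a b) t :=
    fun t ht => (hY t ht).sub (hX t ht).hasDerivWithinAt
  have hint : ∀ {Z Z' : ℝ → E}, ContinuousOn Z (Icc a b) → ContinuousOn Z' (Icc a b) →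
      IntervalIntegrable (fun t => t ^ 3 * lagrangian L (Z t) (Z' t)) volume a b :=
    fun hZ hZ' =>
      ((continuousOn_id.pow 3).mul (continuousOn_lagrangian hZ hZ')).intervalIntegrable_of_Icc hab
  have hsplit : (∫ t in a..b, t ^ 3 * lagrangian L (Y t) (Y' t)) -
      (∫ t in a..b, t ^ 3 * lagrangian L (X t) (X' t)) -
      ∫ t in a..b, t ^ 3 * lagrangian L (Y t - X t) (Y' t - X' t) =
      ∫ t in a..b, t ^ 3 * (⟪X' t, Y' t - X' t⟫ - ⟪Y t - X t, L (X t)⟫) := by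
    rw [← intervalIntegral.integral_sub (hint hYc hY') (hint hXc hX'c),
      ← intervalIntegral.integral_sub ((hint hYc hY').sub (hint hXc hX'c))
        (hint (Z := fun t => Y t - X t) (Z' := fun t => Y' t - X' t) (hYc.sub hXc)
          (hY'.sub hX'c))]
    refine intervalIntegral.integral_congr fun t _ => ?_
    have := lagrangian_add_sub L hL (X t) (X' t) (Y t - X t) (Y' t - X' t)
    simp only [add_sub_cancel] at this
    simp only [← mul_sub, this, add_sub_cancel_right]
  have hfirst := integral_first_variation_eq_zero hab hX hX' hODE hh (hY'.sub hX'c)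
    (by simp [hYa]) (by simp [hYb])
  have hsecond :=
    integral_lagrangian_nonneg_of_short ha hab hshort hh (hY'.sub hX'c) (by simp [hYa])
  linarith

end VanishingDamping

theorem nesterov_vanishing_damping_local_minimality_general
    (d : ℕ) (A : Matrix (Fin d) (Fin d) ℝ) (hA : A.PosSemidef)
    (X X' X'' : ℝ → EuclideanSpace ℝ (Fin d))
    (hX : ∀ t ∈ Ioi (0 : ℝ), HasDerivAt X (X' t) t)
    (hX' : ∀ t ∈ Ioi (0 : ℝ), HasDerivAt X' (X'' t) t)
    (hODE : ∀ t ∈ Ioi (0 : ℝ),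
      X'' t + (3 / t) • X' t + Matrix.toEuclideanLin A (X t) = 0) :
    ∀ t₁ > (0 : ℝ), ∃ T > (0 : ℝ), ∀ t₂, t₁ < t₂ → t₂ ≤ t₁ + T →
      ∀ Y Y' : ℝ → EuclideanSpace ℝ (Fin d),
        (∀ t ∈ Icc t₁ t₂, HasDerivWithinAt Y (Y' t) (Icc t₁ t₂) t) →
        ContinuousOn Y' (Icc t₁ t₂) →
        Y t₁ = X t₁ → Y t₂ = X t₂ →
        nesterovAction d A t₁ t₂ Y Y' ≥ nesterovAction d A t₁ t₂ X X' := by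
  intro t₁ ht₁
  set L := (Matrix.toEuclideanLin A).toContinuousLinearMap
  have hL : (L : EuclideanSpace ℝ (Fin d) →ₗ[ℝ] _).IsSymmetric :=
    Matrix.isSymmetric_toEuclideanLin_iff.mpr hA.1
  have hev : ∀ᶠ s in nhds t₁, ‖L‖ * s ^ 3 * (s - t₁) ^ 2 < t₁ ^ 3 :=
    ContinuousAt.eventually_lt (by fun_prop) continuousAt_const (by simpa using pow_pos ht₁ 3)
  obtain ⟨ε, hε, hshort⟩ := Metric.eventually_nhds_iff.mp hev
  refine ⟨ε / 2, half_pos hε, fun t₂ h12 h2T Y Y' hY hY' hYa hYb => ?_⟩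
  have hpos : Icc t₁ t₂ ⊆ Ioi 0 := fun t ht => ht₁.trans_le ht.1
  exact VanishingDamping.integral_lagrangian_le_of_short hL ht₁ h12.le
    (hshort (by rw [Real.dist_eq, abs_of_pos (by linarith)]; linarith)).le
    (fun t ht => hX t (hpos ht)) (fun t ht => hX' t (hpos ht)) (fun t ht => hODE t (hpos ht))
    hY hY' hYa hYb

/-- **Local optimality of Nesterov with vanishing damping.**  If `X` is a twice continuously
differentiable solution of `Ẍ + (3/t)Ẋ + A X = 0` on `(0, ∞)` with `A` symmetric positive
semidefinite, then for every `t₁ > 0` there is `T > 0` such that on every interval `[t₁, t₂]`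
with `t₁ < t₂ ≤ t₁ + T`, Nesterov's path minimizes the action among all `C¹` curves with the
same endpoints. -/
theorem nesterov_vanishing_damping_local_minimality
    (d : ℕ) (hd : 1 ≤ d) (A : Matrix (Fin d) (Fin d) ℝ) (hA : A.PosSemidef)
    (X X' X'' : ℝ → EuclideanSpace ℝ (Fin d))
    (hX : ∀ t ∈ Ioi (0 : ℝ), HasDerivAt X (X' t) t)
    (hX' : ∀ t ∈ Ioi (0 : ℝ), HasDerivAt X' (X'' t) t)
    (hX'' : ContinuousOn X'' (Ioi (0 : ℝ)))
    (hODE : ∀ t ∈ Ioi (0 : ℝ),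
      X'' t + (3 / t) • X' t + Matrix.toEuclideanLin A (X t) = 0) :
    ∀ t₁ > (0 : ℝ), ∃ T > (0 : ℝ), ∀ t₂, t₁ < t₂ → t₂ ≤ t₁ + T →
      ∀ Y Y' : ℝ → EuclideanSpace ℝ (Fin d),
        (∀ t ∈ Icc t₁ t₂, HasDerivWithinAt Y (Y' t) (Icc t₁ t₂) t) →
        ContinuousOn Y' (Icc t₁ t₂) →
        Y t₁ = X t₁ → Y t₂ = X t₂ →
        nesterovAction d A t₁ t₂ Y Y' ≥ nesterovAction d A t₁ t₂ X X' :=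
  nesterov_vanishing_damping_local_minimality_general d A hA X X' X'' hX hX' hODE
end

section
/- Let d ≥ 1, let A be a symmetric positive semidefinite d×d real matrix whose largest eigenvalue equals β > 0, let f(x) = (1/2)⟨x, A x⟩, let 0 < t₁ < t₂ with t₂ − t₁ > √(40/β), and let a, b ∈ ℝ^d. Then the action J[Y] = ∫_{t₁}^{t₂} t³( (1/2)‖Ẏ(t)‖² − f(Y(t)) ) dt is unbounded below over the set of continuously differentiable curves Y : [t₁,t₂] → ℝ^d with Y(t₁) = a and Y(t₂) = b: for every M ∈ ℝ there exists such a curve Y with J[Y] < M. -/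
open scoped RealInnerProductSpace
open Set

/-! Perturb the segment from `a` to `b` by `c φ(t) v`, where `φ(t) = (t - t₁)(t₂ - t)` vanishes at
both ends and `A v = β v`. The action is then a quadratic polynomial in `c` with leading
coefficient `‖v‖² ∫ t³ (φ'²/2 - β φ²/2)`. Integrating explicitly gives the weighted Poincaré
inequality `(t₂ - t₁)² ∫ t³ φ'² < 40 ∫ t³ φ²`, so this coefficient is negative as soon as
`β (t₂ - t₁)² > 40`, and the action tends to `-∞` as `c → ∞`. -/

theorem integral_cube_mul_add_sub_two_mul_sq (s u : ℝ) :
    ∫ t in s..u, t ^ 3 * (s + u - 2 * t) ^ 2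
      = s ^ 3 * (u - s) ^ 3 / 3 + s ^ 2 * (u - s) ^ 4 / 2 + 2 * s * (u - s) ^ 5 / 5
        + 7 * (u - s) ^ 6 / 60 := by
  have hF : ∀ t ∈ uIcc s u, HasDerivAt
      (fun t : ℝ => 2 / 3 * t ^ 6 - 4 / 5 * (s + u) * t ^ 5 + (s + u) ^ 2 / 4 * t ^ 4)
      (t ^ 3 * (s + u - 2 * t) ^ 2) t := fun t _ => by
    refine ((((hasDerivAt_pow 6 t).const_mul (2 / 3)).sub
      ((hasDerivAt_pow 5 t).const_mul (4 / 5 * (s + u)))).add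
      ((hasDerivAt_pow 4 t).const_mul ((s + u) ^ 2 / 4))).congr_deriv ?_
    push_cast; ring
  rw [intervalIntegral.integral_eq_sub_of_hasDerivAt hF
    (Continuous.intervalIntegrable (by fun_prop) _ _)]
  ring

theorem integral_cube_mul_sub_mul_sub_sq (s u : ℝ) :
    ∫ t in s..u, t ^ 3 * ((t - s) * (u - t)) ^ 2
      = s ^ 3 * (u - s) ^ 5 / 30 + s ^ 2 * (u - s) ^ 6 / 20 + s * (u - s) ^ 7 / 35
        + (u - s) ^ 8 / 168 := by
  have hF : ∀ t ∈ uIcc s u, HasDerivAt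
      (fun t : ℝ => t ^ 8 / 8 - 2 / 7 * (s + u) * t ^ 7 + ((s + u) ^ 2 + 2 * s * u) / 6 * t ^ 6
        - 2 / 5 * s * u * (s + u) * t ^ 5 + s ^ 2 * u ^ 2 / 4 * t ^ 4)
      (t ^ 3 * ((t - s) * (u - t)) ^ 2) t := fun t _ => by
    refine ((((((hasDerivAt_pow 8 t).div_const 8).sub
      ((hasDerivAt_pow 7 t).const_mul (2 / 7 * (s + u)))).add
      ((hasDerivAt_pow 6 t).const_mul (((s + u) ^ 2 + 2 * s * u) / 6))).sub
      ((hasDerivAt_pow 5 t).const_mul (2 / 5 * s * u * (s + u)))).add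
      ((hasDerivAt_pow 4 t).const_mul (s ^ 2 * u ^ 2 / 4))).congr_deriv ?_
    push_cast; ring
  rw [intervalIntegral.integral_eq_sub_of_hasDerivAt hF
    (Continuous.intervalIntegrable (by fun_prop) _ _)]
  ring

theorem sq_mul_integral_cube_mul_deriv_bump_sq_lt {s u : ℝ} (hs : 0 < s) (hsu : s < u) :
    (u - s) ^ 2 * ∫ t in s..u, t ^ 3 * (s + u - 2 * t) ^ 2
      < 40 * ∫ t in s..u, t ^ 3 * ((t - s) * (u - t)) ^ 2 := by
  rw [integral_cube_mul_add_sub_two_mul_sq, integral_cube_mul_sub_mul_sub_sq]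
  have hL : 0 < u - s := sub_pos.2 hsu
  -- the difference of the two sides
  have : 0 < (u - s) ^ 5 * (s ^ 3 + 3 / 2 * s ^ 2 * (u - s) + 26 / 35 * s * (u - s) ^ 2
      + 17 / 140 * (u - s) ^ 3) := by positivity
  linarith

theorem integral_cube_mul_bump_sq_pos {s u : ℝ} (hs : 0 < s) (hsu : s < u) :
    0 < ∫ t in s..u, t ^ 3 * ((t - s) * (u - t)) ^ 2 :=
  intervalIntegral.intervalIntegral_pos_of_pos_on
    (Continuous.intervalIntegrable (by fun_prop) _ _)
    (fun t ht => by
      have := hs.trans ht.1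
      have := sub_pos.2 ht.1
      have := sub_pos.2 ht.2
      positivity)
    hsu

theorem integral_bump_lagrangian_neg {s u β : ℝ} (hs : 0 < s) (hsu : s < u)
    (hβ : 40 < β * (u - s) ^ 2) :
    ∫ t in s..u, t ^ 3 * ((1 / 2) * (s + u - 2 * t) ^ 2 - (β / 2) * ((t - s) * (u - t)) ^ 2)
      < 0 := by
  have hsplit :
      ∫ t in s..u, t ^ 3 * ((1 / 2) * (s + u - 2 * t) ^ 2 - (β / 2) * ((t - s) * (u - t)) ^ 2)
      = (1 / 2) * (∫ t in s..u, t ^ 3 * (s + u - 2 * t) ^ 2)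
        - (β / 2) * ∫ t in s..u, t ^ 3 * ((t - s) * (u - t)) ^ 2 := by
    rw [← intervalIntegral.integral_const_mul, ← intervalIntegral.integral_const_mul,
      ← intervalIntegral.integral_sub (Continuous.intervalIntegrable (by fun_prop) _ _)
        (Continuous.intervalIntegrable (by fun_prop) _ _)]
    congr 1 with t
    ring
  have hI := sq_mul_integral_cube_mul_deriv_bump_sq_lt hs hsu
  have hpos := integral_cube_mul_bump_sq_pos hs hsu
  have hL : 0 < (u - s) ^ 2 := by have := sub_pos.2 hsu; positivity
  rw [hsplit]
  nlinarith

theorem exists_add_mul_add_sq_mul_lt (P Q R : ℝ) (hR : R < 0) (M : ℝ) :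
    ∃ c : ℝ, P + c * Q + c ^ 2 * R < M := by
  set c := max 1 ((|Q| + |P - M| + 1) / -R)
  have hc1 : 1 ≤ c := le_max_left _ _
  have hcR : |Q| + |P - M| + 1 ≤ c * -R := (div_le_iff₀ (neg_pos.2 hR)).1 (le_max_right _ _)
  refine ⟨c, ?_⟩
  have hc0 : 0 ≤ c := zero_le_one.trans hc1
  nlinarith [mul_le_mul_of_nonneg_left (le_abs_self Q) hc0, mul_le_mul_of_nonneg_left hcR hc0,
    le_abs_self (P - M), mul_le_mul_of_nonneg_right hc1 (by positivity : 0 ≤ |P - M| + 1)]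

section DampedAction

variable {E : Type*} [NormedAddCommGroup E] [InnerProductSpace ℝ E]

noncomputable def dampedAction (T : E →ₗ[ℝ] E) (t₁ t₂ : ℝ) (Y Y' : ℝ → E) : ℝ :=
  ∫ t in t₁..t₂, t ^ 3 * ((1 / 2) * ‖Y' t‖ ^ 2 - (1 / 2) * ⟪Y t, T (Y t)⟫)

theorem lagrangian_add_smul (T : E →ₗ[ℝ] E) (y y' z z' : E) (c : ℝ) :
    (1 / 2) * ‖y' + c • z'‖ ^ 2 - (1 / 2) * ⟪y + c • z, T (y + c • z)⟫
      = ((1 / 2) * ‖y'‖ ^ 2 - (1 / 2) * ⟪y, T y⟫)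
        + c * (⟪y', z'⟫ - (1 / 2) * (⟪y, T z⟫ + ⟪z, T y⟫))
        + c ^ 2 * ((1 / 2) * ‖z'‖ ^ 2 - (1 / 2) * ⟪z, T z⟫) := by
  simp only [map_add, map_smul, inner_add_left, inner_add_right, real_inner_smul_left,
    real_inner_smul_right, norm_add_sq_real, norm_smul, Real.norm_eq_abs, mul_pow, sq_abs]
  ring

theorem dampedAction_add_smul [FiniteDimensional ℝ E] (T : E →ₗ[ℝ] E) {t₁ t₂ : ℝ}
    {Y Y' Z Z' : ℝ → E} (hY : ContinuousOn Y (uIcc t₁ t₂)) (hY' : ContinuousOn Y' (uIcc t₁ t₂))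
    (hZ : ContinuousOn Z (uIcc t₁ t₂)) (hZ' : ContinuousOn Z' (uIcc t₁ t₂)) :
    ∃ B : ℝ, ∀ c : ℝ, dampedAction T t₁ t₂ (Y + c • Z) (Y' + c • Z')
      = dampedAction T t₁ t₂ Y Y' + c * B + c ^ 2 * dampedAction T t₁ t₂ Z Z' := by
  have hT := T.continuous_of_finiteDimensional
  refine ⟨∫ t in t₁..t₂, t ^ 3 * (⟪Y' t, Z' t⟫ - (1 / 2) * (⟪Y t, T (Z t)⟫ + ⟪Z t, T (Y t)⟫)),
    fun c => ?_⟩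
  have hint : ∀ {f : ℝ → ℝ}, ContinuousOn f (uIcc t₁ t₂) →
      IntervalIntegrable f MeasureTheory.volume t₁ t₂ := ContinuousOn.intervalIntegrable
  have hpt : ∀ t : ℝ, t ^ 3 * ((1 / 2) * ‖(Y' + c • Z') t‖ ^ 2
      - (1 / 2) * ⟪(Y + c • Z) t, T ((Y + c • Z) t)⟫)
      = t ^ 3 * ((1 / 2) * ‖Y' t‖ ^ 2 - (1 / 2) * ⟪Y t, T (Y t)⟫)
        + c * (t ^ 3 * (⟪Y' t, Z' t⟫ - (1 / 2) * (⟪Y t, T (Z t)⟫ + ⟪Z t, T (Y t)⟫)))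
        + c ^ 2 * (t ^ 3 * ((1 / 2) * ‖Z' t‖ ^ 2 - (1 / 2) * ⟪Z t, T (Z t)⟫)) := fun t => by
    rw [Pi.add_apply, Pi.add_apply, Pi.smul_apply, Pi.smul_apply, lagrangian_add_smul]
    ring
  simp only [dampedAction, hpt]
  rw [intervalIntegral.integral_add (hint (by fun_prop)) (hint (by fun_prop)),
    intervalIntegral.integral_add (hint (by fun_prop)) (hint (by fun_prop)),
    intervalIntegral.integral_const_mul, intervalIntegral.integral_const_mul]

theorem exists_dampedAction_add_smul_lt [FiniteDimensional ℝ E] (T : E →ₗ[ℝ] E) {t₁ t₂ : ℝ}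
    {Y Y' Z Z' : ℝ → E} (hY : ContinuousOn Y (uIcc t₁ t₂)) (hY' : ContinuousOn Y' (uIcc t₁ t₂))
    (hZ : ContinuousOn Z (uIcc t₁ t₂)) (hZ' : ContinuousOn Z' (uIcc t₁ t₂))
    (hneg : dampedAction T t₁ t₂ Z Z' < 0) (M : ℝ) :
    ∃ c : ℝ, dampedAction T t₁ t₂ (Y + c • Z) (Y' + c • Z') < M := by
  obtain ⟨B, hB⟩ := dampedAction_add_smul T hY hY' hZ hZ'
  obtain ⟨c, hc⟩ := exists_add_mul_add_sq_mul_lt _ B _ hneg M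
  exact ⟨c, (hB c).trans_lt hc⟩

theorem dampedAction_smul_eigenvector {T : E →ₗ[ℝ] E} {β : ℝ} {v : E} (hv : T v = β • v)
    (t₁ t₂ : ℝ) (φ φ' : ℝ → ℝ) :
    dampedAction T t₁ t₂ (fun t => φ t • v) (fun t => φ' t • v)
      = (∫ t in t₁..t₂, t ^ 3 * ((1 / 2) * φ' t ^ 2 - (β / 2) * φ t ^ 2)) * ‖v‖ ^ 2 := by
  rw [dampedAction, ← intervalIntegral.integral_mul_const]
  congr 1 with t
  simp only [map_smul, hv, real_inner_smul_left, real_inner_smul_right, norm_smul,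
    real_inner_self_eq_norm_sq, Real.norm_eq_abs, mul_pow, sq_abs]
  ring

end DampedAction

theorem hasDerivAt_bump_smul {F : Type*} [NormedAddCommGroup F] [NormedSpace ℝ F]
    (s u t : ℝ) (v : F) :
    HasDerivAt (fun t => ((t - s) * (u - t)) • v) ((s + u - 2 * t) • v) t := by
  refine ((((hasDerivAt_id' t).sub_const s).mul
    ((hasDerivAt_id' t).const_sub u)).smul_const v).congr_deriv ?_
  congr 1
  ring

theorem nesterov_action_unbounded_below_general
    (d : ℕ) (A : Matrix (Fin d) (Fin d) ℝ)
    (β : ℝ) (hβ : 0 < β)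
    (hβeig : ∃ v : EuclideanSpace ℝ (Fin d), v ≠ 0 ∧ Matrix.toEuclideanLin A v = β • v)
    (t₁ t₂ : ℝ) (ht₁ : 0 < t₁) (ht : t₁ < t₂) (hgap : t₂ - t₁ > Real.sqrt (40 / β))
    (a b : EuclideanSpace ℝ (Fin d)) :
    ∀ M : ℝ, ∃ Y Y' : ℝ → EuclideanSpace ℝ (Fin d),
      (∀ t ∈ Icc t₁ t₂, HasDerivWithinAt Y (Y' t) (Icc t₁ t₂) t) ∧
      ContinuousOn Y' (Icc t₁ t₂) ∧ Y t₁ = a ∧ Y t₂ = b ∧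
      (∫ t in t₁..t₂, t ^ 3 *
        ((1 / 2) * ‖Y' t‖ ^ 2 - (1 / 2) * ⟪Y t, Matrix.toEuclideanLin A (Y t)⟫)) < M := by
  intro M
  obtain ⟨v, hv, hvA⟩ := hβeig
  have h40 : 40 < β * (t₂ - t₁) ^ 2 := by
    rw [gt_iff_lt, Real.sqrt_lt' (sub_pos.2 ht), div_lt_iff₀ hβ] at hgap
    linarith
  set w := (t₂ - t₁)⁻¹ • (b - a)
  set L : ℝ → EuclideanSpace ℝ (Fin d) := fun t => a + (t - t₁) • w
  set Z : ℝ → EuclideanSpace ℝ (Fin d) := fun t => ((t - t₁) * (t₂ - t)) • v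
  set Z' : ℝ → EuclideanSpace ℝ (Fin d) := fun t => (t₁ + t₂ - 2 * t) • v
  have hZ : dampedAction (Matrix.toEuclideanLin A) t₁ t₂ Z Z' < 0 := by
    rw [dampedAction_smul_eigenvector hvA]
    exact mul_neg_of_neg_of_pos (integral_bump_lagrangian_neg ht₁ ht h40)
      (pow_pos (norm_pos_iff.2 hv) 2)
  obtain ⟨c, hc⟩ := exists_dampedAction_add_smul_lt (Matrix.toEuclideanLin A)
    (Y := L) (Y' := fun _ => w) (by fun_prop) (by fun_prop) (by fun_prop) (by fun_prop) hZ M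
  refine ⟨L + c • Z, (fun _ => w) + c • Z', fun t _ => ?_, by fun_prop, ?_, ?_, hc⟩
  · have hL : HasDerivAt L w t := by
      simpa only [one_smul] using (((hasDerivAt_id' t).sub_const t₁).smul_const w).const_add a
    exact (hL.add ((hasDerivAt_bump_smul t₁ t₂ t v).const_smul c)).hasDerivWithinAt
  · simp [L, Z]
  · simp [L, Z, w, smul_smul, mul_inv_cancel₀ (sub_ne_zero.2 ht.ne')]

/-- **The action is unbounded below on long intervals.**  Let `A` be symmetric positive
semidefinite with largest eigenvalue `β > 0` (i.e. `⟨x, A x⟩ ≤ β‖x‖²` for all `x`, with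
equality attained by some eigenvector `v ≠ 0`).  If `t₂ - t₁ > √(40/β)`, the action
`J[Y] = ∫_{t₁}^{t₂} t³((1/2)‖Ẏ‖² - (1/2)⟨Y, A Y⟩) dt` is unbounded below over `C¹` curves
with fixed endpoints `Y(t₁) = a`, `Y(t₂) = b`. -/
theorem nesterov_action_unbounded_below
    (d : ℕ) (hd : 1 ≤ d) (A : Matrix (Fin d) (Fin d) ℝ) (hA : A.PosSemidef)
    (β : ℝ) (hβ : 0 < β)
    (hβmax : ∀ x : EuclideanSpace ℝ (Fin d), ⟪x, Matrix.toEuclideanLin A x⟫ ≤ β * ‖x‖ ^ 2)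
    (hβeig : ∃ v : EuclideanSpace ℝ (Fin d), v ≠ 0 ∧ Matrix.toEuclideanLin A v = β • v)
    (t₁ t₂ : ℝ) (ht₁ : 0 < t₁) (ht : t₁ < t₂) (hgap : t₂ - t₁ > Real.sqrt (40 / β))
    (a b : EuclideanSpace ℝ (Fin d)) :
    ∀ M : ℝ, ∃ Y Y' : ℝ → EuclideanSpace ℝ (Fin d),
      (∀ t ∈ Icc t₁ t₂, HasDerivWithinAt Y (Y' t) (Icc t₁ t₂) t) ∧
      ContinuousOn Y' (Icc t₁ t₂) ∧ Y t₁ = a ∧ Y t₂ = b ∧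
      (∫ t in t₁..t₂, t ^ 3 *
        ((1 / 2) * ‖Y' t‖ ^ 2 - (1 / 2) * ⟪Y t, Matrix.toEuclideanLin A (Y t)⟫)) < M :=
  nesterov_action_unbounded_below_general d A β hβ hβeig t₁ t₂ ht₁ ht hgap a b
end

section
/- Let β > 0 and α ≥ 2√β, and let t₁ < t₂ be real numbers. Then for every continuously differentiable function h : [t₁,t₂] → ℝ with h(t₁) = h(t₂) = 0, one has ∫_{t₁}^{t₂} e^{αt}( ḣ(t)² − β h(t)² ) dt ≥ 0. -/
/-!
Since `α² ≥ 4β`, the characteristic polynomial `c² - αc + β` has a real root `c`. Completing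
the square with it gives `e^{αt}(ḣ² - βh²) = e^{αt}(ḣ + ch)² - (c e^{αt} h²)'`, and the last
term integrates to zero because `h` vanishes at both endpoints.
-/

open Set

theorem intervalIntegral.integral_eq_sub_of_hasDerivWithinAt_Icc {E : Type*}
    [NormedAddCommGroup E] [NormedSpace ℝ E] [CompleteSpace E] {f f' : ℝ → E} {a b : ℝ}
    (hab : a ≤ b) (hf : ∀ t ∈ Icc a b, HasDerivWithinAt f (f' t) (Icc a b) t)
    (hf' : ContinuousOn f' (Icc a b)) : ∫ t in a..b, f' t = f b - f a :=
  integral_eq_sub_of_hasDeriv_right_of_le hab (fun t ht => (hf t ht).continuousWithinAt)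
    (fun t ht => ((hf t (Ioo_subset_Icc_self ht)).hasDerivAt
      (Icc_mem_nhds ht.1 ht.2)).hasDerivWithinAt)
    (hf'.intervalIntegrable_of_Icc hab)

theorem exists_sq_sub_mul_add_eq_zero {α β : ℝ} (h : 4 * β ≤ α ^ 2) :
    ∃ c : ℝ, c ^ 2 - α * c + β = 0 := by
  obtain ⟨c, hc⟩ := exists_quadratic_eq_zero (a := (1 : ℝ)) (b := -α) (c := β) one_ne_zero
    ⟨√(α ^ 2 - 4 * β), by
      rw [discrim, Real.mul_self_sqrt (by linarith)]; ring⟩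
  exact ⟨c, by linear_combination hc⟩

theorem four_mul_le_sq_of_two_mul_sqrt_le {α β : ℝ} (h : 2 * √β ≤ α) : 4 * β ≤ α ^ 2 := by
  rcases le_or_gt β 0 with hβ | hβ
  · nlinarith [sq_nonneg α]
  · nlinarith [Real.sq_sqrt hβ.le, Real.sqrt_nonneg β]

theorem integral_exp_mul_deriv_sq_sub_eq_integral_sq_add {α β c a b : ℝ} {h h' : ℝ → ℝ}
    (hab : a ≤ b) (hc : c ^ 2 - α * c + β = 0)
    (hh : ∀ t ∈ Icc a b, HasDerivWithinAt h (h' t) (Icc a b) t)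
    (hh' : ContinuousOn h' (Icc a b)) (ha : h a = 0) (hb : h b = 0) :
    ∫ t in a..b, Real.exp (α * t) * (h' t ^ 2 - β * h t ^ 2) =
      ∫ t in a..b, Real.exp (α * t) * (h' t + c * h t) ^ 2 := by
  have hcont_h : ContinuousOn h (Icc a b) := fun t ht => (hh t ht).continuousWithinAt
  have hboundary_deriv : ∀ t ∈ Icc a b,
      HasDerivWithinAt (fun t => c * Real.exp (α * t) * h t ^ 2)
        (c * Real.exp (α * t) * (α * h t ^ 2 + 2 * h t * h' t)) (Icc a b) t := by
    intro t ht
    have hexp : HasDerivAt (fun t => c * Real.exp (α * t)) (c * (Real.exp (α * t) * α)) t := by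
      simpa using ((hasDerivAt_id t).const_mul α).exp.const_mul c
    exact (hexp.hasDerivWithinAt.mul ((hh t ht).fun_pow 2)).congr_deriv (by ring)
  have hboundary_cont : ContinuousOn
      (fun t => c * Real.exp (α * t) * (α * h t ^ 2 + 2 * h t * h' t)) (Icc a b) := by
    fun_prop
  have hboundary : ∫ t in a..b, c * Real.exp (α * t) * (α * h t ^ 2 + 2 * h t * h' t) = 0 := by
    rw [intervalIntegral.integral_eq_sub_of_hasDerivWithinAt_Icc hab hboundary_deriv
      hboundary_cont, ha, hb]
    ring
  have hsq : IntervalIntegrable (fun t => Real.exp (α * t) * (h' t + c * h t) ^ 2)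
      MeasureTheory.volume a b := by
    refine ContinuousOn.intervalIntegrable_of_Icc hab ?_
    fun_prop
  calc ∫ t in a..b, Real.exp (α * t) * (h' t ^ 2 - β * h t ^ 2)
      = ∫ t in a..b, (Real.exp (α * t) * (h' t + c * h t) ^ 2 -
          c * Real.exp (α * t) * (α * h t ^ 2 + 2 * h t * h' t)) :=
        intervalIntegral.integral_congr fun t _ => by
          linear_combination -(Real.exp (α * t) * h t ^ 2) * hc
    _ = ∫ t in a..b, Real.exp (α * t) * (h' t + c * h t) ^ 2 := by
        rw [intervalIntegral.integral_sub hsq (hboundary_cont.intervalIntegrable_of_Icc hab),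
          hboundary, sub_zero]

theorem overdamped_second_variation_nonneg_general
    (β α t₁ t₂ : ℝ) (hα : 2 * Real.sqrt β ≤ α) (ht : t₁ < t₂) :
    ∀ h h' : ℝ → ℝ,
      (∀ t ∈ Icc t₁ t₂, HasDerivWithinAt h (h' t) (Icc t₁ t₂) t) →
      ContinuousOn h' (Icc t₁ t₂) → h t₁ = 0 → h t₂ = 0 →
      0 ≤ ∫ t in t₁..t₂, Real.exp (α * t) * ((h' t) ^ 2 - β * (h t) ^ 2) := by
  intro h h' hh hh' h₁ h₂
  obtain ⟨c, hc⟩ := exists_sq_sub_mul_add_eq_zero (four_mul_le_sq_of_two_mul_sqrt_le hα)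
  rw [integral_exp_mul_deriv_sq_sub_eq_integral_sq_add ht.le hc hh hh' h₁ h₂]
  exact intervalIntegral.integral_nonneg ht.le fun t _ => by positivity

/-- **Positive semidefiniteness of the second variation in the (over/critically) damped case.**
If `β > 0` and `α ≥ 2√β`, then for every admissible `C¹` perturbation `h` on `[t₁, t₂]`
vanishing at both endpoints, `∫_{t₁}^{t₂} e^{αt}(ḣ² - βh²) dt ≥ 0`. -/
theorem overdamped_second_variation_nonneg
    (β α t₁ t₂ : ℝ) (hβ : 0 < β) (hα : 2 * Real.sqrt β ≤ α) (ht : t₁ < t₂) :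
    ∀ h h' : ℝ → ℝ,
      (∀ t ∈ Icc t₁ t₂, HasDerivWithinAt h (h' t) (Icc t₁ t₂) t) →
      ContinuousOn h' (Icc t₁ t₂) → h t₁ = 0 → h t₂ = 0 →
      0 ≤ ∫ t in t₁..t₂, Real.exp (α * t) * ((h' t) ^ 2 - β * (h t) ^ 2) :=
  overdamped_second_variation_nonneg_general β α t₁ t₂ hα ht
end

section
/- Let β > 0 and 0 ≤ α < 2√β, and let t₁ < t₂ be real numbers with t₂ − t₁ < 2π/√(4β − α²). Then for every continuously differentiable function h : [t₁,t₂] → ℝ with h(t₁) = h(t₂) = 0, one has ∫_{t₁}^{t₂} e^{αt}( ḣ(t)² − β h(t)² ) dt ≥ 0. -/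
open Set Real Topology

/-!
Legendre's argument with Jacobi's condition. If `w` solves the Riccati equation
`w' = -R - w² / P` on `[a, b]` with `P > 0`, then `P h'² - R h² = (w h²)' + P (h' - w h / P)²`,
so for `h` vanishing at both ends the quadratic form `∫ (P h'² - R h²)` is an integral of squares.
A Riccati solution is `w = P u' / u` for any Jacobi field `u` (`(P u')' = -R u`) without zeros.
Here `P = e^{αt}`, `R = β e^{αt}`, and `u = e^{-αt/2} sin (ω (t - t₀))` with
`ω = √(4β - α²) / 2`; since the interval is shorter than `π / ω`, the phase `t₀` can be chosen so
that `u > 0` on it.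
-/

theorem integral_mul_deriv_sq_sub_mul_sq_nonneg_of_riccati {a b : ℝ} {P R w h h' : ℝ → ℝ}
    (hab : a ≤ b)
    (hP : ContinuousOn P (Icc a b)) (hP_pos : ∀ t ∈ Icc a b, 0 < P t)
    (hR : ContinuousOn R (Icc a b))
    (hw : ∀ t ∈ Icc a b, HasDerivWithinAt w (-R t - w t ^ 2 / P t) (Icc a b) t)
    (hh : ∀ t ∈ Icc a b, HasDerivWithinAt h (h' t) (Icc a b) t) (hh' : ContinuousOn h' (Icc a b))
    (ha : h a = 0) (hb : h b = 0) :
    0 ≤ ∫ t in a..b, (P t * h' t ^ 2 - R t * h t ^ 2) := by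
  have hw_cont : ContinuousOn w (Icc a b) := fun t ht => (hw t ht).continuousWithinAt
  have hh_cont : ContinuousOn h (Icc a b) := fun t ht => (hh t ht).continuousWithinAt
  set G := fun t => P t * (h' t - w t * h t / P t) ^ 2
  set D := fun t => P t * h' t ^ 2 - R t * h t ^ 2 - G t
  have hG_cont : ContinuousOn G (Icc a b) :=
    hP.mul ((hh'.sub ((hw_cont.mul hh_cont).div hP fun t ht => (hP_pos t ht).ne')).pow 2)
  have hD_cont : ContinuousOn D (Icc a b) :=
    ((hP.mul (hh'.pow 2)).sub (hR.mul (hh_cont.pow 2))).sub hG_cont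
  have hD_deriv : ∀ t ∈ Ioo a b, HasDerivAt (fun t => w t * h t ^ 2) (D t) t := by
    intro t ht
    have hnhds : Icc a b ∈ 𝓝 t := Icc_mem_nhds ht.1 ht.2
    have ht' := Ioo_subset_Icc_self ht
    refine (((hw t ht').hasDerivAt hnhds).fun_mul
      (((hh t ht').hasDerivAt hnhds).fun_pow 2)).congr_deriv ?_
    have hPt := (hP_pos t ht').ne'
    simp only [D, G]
    field_simp
    ring
  have hD_zero : ∫ t in a..b, D t = 0 := by
    rw [intervalIntegral.integral_eq_sub_of_hasDerivAt_of_le hab (hw_cont.mul (hh_cont.pow 2))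
      hD_deriv (hD_cont.intervalIntegrable_of_Icc hab)]
    simp [ha, hb]
  calc 0 ≤ ∫ t in a..b, G t :=
        intervalIntegral.integral_nonneg hab fun t ht => mul_nonneg (hP_pos t ht).le (sq_nonneg _)
    _ = (∫ t in a..b, D t) + ∫ t in a..b, G t := by rw [hD_zero, zero_add]
    _ = ∫ t in a..b, (P t * h' t ^ 2 - R t * h t ^ 2) := by
      rw [← intervalIntegral.integral_add (hD_cont.intervalIntegrable_of_Icc hab)
        (hG_cont.intervalIntegrable_of_Icc hab)]
      simp [D]

theorem HasDerivWithinAt.riccati_of_jacobi {s : Set ℝ} {t : ℝ} {P R u u' : ℝ → ℝ}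
    (hu_deriv : HasDerivWithinAt u (u' t) s t)
    (hPu' : HasDerivWithinAt (fun x => P x * u' x) (-R t * u t) s t) (hu : u t ≠ 0) :
    HasDerivWithinAt (fun x => P x * u' x / u x) (-R t - (P t * u' t / u t) ^ 2 / P t) s t := by
  refine (hPu'.fun_div hu_deriv hu).congr_deriv ?_
  field_simp

theorem exists_forall_Icc_sin_pos {ω t₁ t₂ : ℝ} (hω : 0 < ω) (hgap : t₂ - t₁ < π / ω) :
    ∃ t₀, ∀ t ∈ Icc t₁ t₂, 0 < sin (ω * (t - t₀)) := by
  refine ⟨(t₁ + t₂ - π / ω) / 2, fun t ht => sin_pos_of_pos_of_lt_pi ?_ ?_⟩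
  · exact mul_pos hω (by linarith [ht.1])
  · rw [← lt_div_iff₀' hω]
    linarith [ht.2]

section DampedOscillator

variable (α ω t₀ : ℝ)

noncomputable def dampedSin (t : ℝ) : ℝ := exp (-(α / 2) * t) * sin (ω * (t - t₀))

noncomputable def dampedSinDeriv (t : ℝ) : ℝ :=
  exp (-(α / 2) * t) * (ω * cos (ω * (t - t₀)) - α / 2 * sin (ω * (t - t₀)))

theorem hasDerivAt_dampedSin (t : ℝ) :
    HasDerivAt (dampedSin α ω t₀) (dampedSinDeriv α ω t₀ t) t := by
  have hlin : HasDerivAt (fun x => ω * (x - t₀)) ω t := by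
    simpa using ((hasDerivAt_id t).sub_const t₀).const_mul ω
  refine (((hasDerivAt_id' t).const_mul (-(α / 2))).exp.fun_mul hlin.sin).congr_deriv ?_
  rw [dampedSinDeriv]
  ring

/-- The Jacobi equation `u'' + α u' + β u = 0` in self-adjoint form `(e^{αt} u')' = -β e^{αt} u`. -/
theorem hasDerivAt_exp_mul_dampedSinDeriv {β : ℝ} (hω : ω ^ 2 = β - α ^ 2 / 4) (t : ℝ) :
    HasDerivAt (fun x => exp (α * x) * dampedSinDeriv α ω t₀ x)
      (-(β * exp (α * t)) * dampedSin α ω t₀ t) t := by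
  have hlin : HasDerivAt (fun x => ω * (x - t₀)) ω t := by
    simpa using ((hasDerivAt_id t).sub_const t₀).const_mul ω
  have hexp (x : ℝ) : exp (α * x) * exp (-(α / 2) * x) = exp (α / 2 * x) := by
    rw [← exp_add]; ring_nf
  have hfun : (fun x => exp (α * x) * dampedSinDeriv α ω t₀ x) =
      fun x => exp (α / 2 * x) * (ω * cos (ω * (x - t₀)) - α / 2 * sin (ω * (x - t₀))) :=
    funext fun x => by rw [dampedSinDeriv, ← mul_assoc, hexp]
  rw [hfun, dampedSin]
  refine (((hasDerivAt_id' t).const_mul (α / 2)).exp.fun_mul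
    ((hlin.cos.const_mul ω).fun_sub (hlin.sin.const_mul (α / 2)))).congr_deriv ?_
  linear_combination (β * sin (ω * (t - t₀))) * hexp t - (exp (α / 2 * t) * sin (ω * (t - t₀))) * hω

end DampedOscillator

theorem underdamped_second_variation_nonneg_short_interval_general
    (β α t₁ t₂ : ℝ) (hα0 : 0 ≤ α) (hα : α < 2 * Real.sqrt β) (ht : t₁ < t₂)
    (hgap : t₂ - t₁ < 2 * Real.pi / Real.sqrt (4 * β - α ^ 2)) :
    ∀ h h' : ℝ → ℝ,
      (∀ t ∈ Icc t₁ t₂, HasDerivWithinAt h (h' t) (Icc t₁ t₂) t) →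
      ContinuousOn h' (Icc t₁ t₂) → h t₁ = 0 → h t₂ = 0 →
      0 ≤ ∫ t in t₁..t₂, Real.exp (α * t) * ((h' t) ^ 2 - β * (h t) ^ 2) := by
  intro h h' hh hh' ht₁ ht₂
  have hαβ : 0 < 4 * β - α ^ 2 := by
    have := (lt_sqrt (y := β) (by positivity : 0 ≤ α / 2)).mp (by linarith)
    linarith
  set ω := √(4 * β - α ^ 2) / 2
  have hω : 0 < ω := by positivity
  have hω_sq : ω ^ 2 = β - α ^ 2 / 4 := by rw [div_pow, sq_sqrt hαβ.le]; ring
  obtain ⟨t₀, hsin⟩ := exists_forall_Icc_sin_pos hω (by rwa [div_div_eq_mul_div, mul_comm])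
  have hw (t : ℝ) (ht : t ∈ Icc t₁ t₂) :=
    (hasDerivAt_dampedSin α ω t₀ t).hasDerivWithinAt.riccati_of_jacobi (s := Icc t₁ t₂)
      (R := fun t => β * exp (α * t))
      (hasDerivAt_exp_mul_dampedSinDeriv α ω t₀ hω_sq t).hasDerivWithinAt
      (mul_pos (exp_pos _) (hsin t ht)).ne'
  have key := integral_mul_deriv_sq_sub_mul_sq_nonneg_of_riccati ht.le (by fun_prop)
    (fun t _ => exp_pos (α * t)) (by fun_prop) hw hh hh' ht₁ ht₂
  exact key.trans_eq (intervalIntegral.integral_congr fun t _ => by ring)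

/-- **Positive semidefiniteness of the second variation in the underdamped case on short
intervals.**  If `β > 0`, `0 ≤ α < 2√β`, and `t₂ - t₁ < 2π/√(4β - α²)`, then for every
admissible `C¹` perturbation `h` on `[t₁, t₂]` vanishing at both endpoints,
`∫_{t₁}^{t₂} e^{αt}(ḣ² - βh²) dt ≥ 0`. -/
theorem underdamped_second_variation_nonneg_short_interval
    (β α t₁ t₂ : ℝ) (hβ : 0 < β) (hα0 : 0 ≤ α) (hα : α < 2 * Real.sqrt β) (ht : t₁ < t₂)
    (hgap : t₂ - t₁ < 2 * Real.pi / Real.sqrt (4 * β - α ^ 2)) :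
    ∀ h h' : ℝ → ℝ,
      (∀ t ∈ Icc t₁ t₂, HasDerivWithinAt h (h' t) (Icc t₁ t₂) t) →
      ContinuousOn h' (Icc t₁ t₂) → h t₁ = 0 → h t₂ = 0 →
      0 ≤ ∫ t in t₁..t₂, Real.exp (α * t) * ((h' t) ^ 2 - β * (h t) ^ 2) :=
  underdamped_second_variation_nonneg_short_interval_general β α t₁ t₂ hα0 hα ht hgap
end

section
/- Let β > 0 and 0 ≤ α < 2√β, and let t₁ < t₂ be real numbers with t₂ − t₁ > 2π/√(4β − α²). Then there exists a continuously differentiable function h : [t₁,t₂] → ℝ with h(t₁) = h(t₂) = 0 such that ∫_{t₁}^{t₂} e^{αt}( ḣ(t)² − β h(t)² ) dt < 0. -/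
/-!
Write `h = e^{-αt/2} u`. Then `e^{αt}(ḣ² - βh²) = u̇² - ω²u² - α u u̇` with `ω² = β - α²/4`,
and the cross term `α u u̇ = (α/2)(u²)˙` integrates to zero when `u` vanishes at both ends, so
the damped form becomes the undamped one `∫ u̇² - ω²u²`. For the first Dirichlet mode
`u = sin(k(t - t₁))`, `k = π/(t₂ - t₁)`, this equals `(k² - ω²)(t₂ - t₁)/2`, which is negative
precisely when the interval is longer than the half-period `π/ω = 2π/√(4β - α²)`.
-/

open Set Real intervalIntegral MeasureTheory

theorem exp_mul_sq_sub_sq_liouville (α β t u u' : ℝ) :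
    exp (α * t) * ((exp (-(α / 2) * t) * (u' - α / 2 * u)) ^ 2 - β * (exp (-(α / 2) * t) * u) ^ 2)
      = u' ^ 2 - (β - α ^ 2 / 4) * u ^ 2 - α * (u * u') := by
  have hexp : exp (α * t) * exp (-(α / 2) * t) ^ 2 = 1 := by
    rw [sq, ← exp_add, ← exp_add, ← exp_zero]
    ring_nf
  linear_combination ((u' - α / 2 * u) ^ 2 - β * u ^ 2) * hexp

theorem hasDerivAt_exp_mul_liouville {u : ℝ → ℝ} {u' t : ℝ} (α : ℝ) (hu : HasDerivAt u u' t) :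
    HasDerivAt (fun t => exp (-(α / 2) * t) * u t) (exp (-(α / 2) * t) * (u' - α / 2 * u t)) t := by
  have hlin : HasDerivAt (fun t : ℝ => -(α / 2) * t) (-(α / 2)) t := by
    simpa using (hasDerivAt_id t).const_mul (-(α / 2))
  exact (hlin.exp.mul hu).congr_deriv (by ring)

theorem integral_mul_deriv_eq_zero_of_eq_zero {a b : ℝ} {u u' : ℝ → ℝ}
    (hu : ∀ t ∈ uIcc a b, HasDerivAt u (u' t) t) (hu' : IntervalIntegrable u' volume a b)
    (ha : u a = 0) (hb : u b = 0) :
    ∫ t in a..b, u t * u' t = 0 := by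
  have hsum := integral_deriv_mul_eq_sub hu hu hu' hu'
  simp only [ha, hb, mul_zero, sub_self, mul_comm (u' _), ← two_mul] at hsum
  rwa [intervalIntegral.integral_const_mul, mul_eq_zero, or_iff_right two_ne_zero] at hsum

theorem integral_exp_mul_sq_sub_sq_liouville (α β : ℝ) {a b : ℝ} {u u' : ℝ → ℝ}
    (hu : ∀ t ∈ uIcc a b, HasDerivAt u (u' t) t) (hu' : ContinuousOn u' (uIcc a b))
    (ha : u a = 0) (hb : u b = 0) :
    ∫ t in a..b, exp (α * t) *
        ((exp (-(α / 2) * t) * (u' t - α / 2 * u t)) ^ 2 - β * (exp (-(α / 2) * t) * u t) ^ 2)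
      = ∫ t in a..b, (u' t ^ 2 - (β - α ^ 2 / 4) * u t ^ 2) := by
  have hu_cont : ContinuousOn u (uIcc a b) := fun t ht => (hu t ht).continuousAt.continuousWithinAt
  simp_rw [exp_mul_sq_sub_sq_liouville]
  rw [intervalIntegral.integral_sub, intervalIntegral.integral_const_mul,
    integral_mul_deriv_eq_zero_of_eq_zero hu hu'.intervalIntegrable ha hb, mul_zero, sub_zero]
  · exact ((hu'.pow 2).sub (continuousOn_const.mul (hu_cont.pow 2))).intervalIntegrable
  · exact (continuousOn_const.mul (hu_cont.mul hu')).intervalIntegrable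

theorem integral_sq_deriv_sub_sq_sin_mode (c : ℝ) {a b k : ℝ} (hk : k * (b - a) = π) :
    ∫ t in a..b, ((k * cos (k * (t - a))) ^ 2 - c * sin (k * (t - a)) ^ 2)
      = (k ^ 2 - c) * (b - a) / 2 := by
  have hk0 : k ≠ 0 := by rintro rfl; simp [pi_ne_zero.symm] at hk
  have hba : b - a = π / k := by rw [eq_div_iff hk0, mul_comm, hk]
  rw [integral_comp_sub_right (fun x => (k * cos (k * x)) ^ 2 - c * sin (k * x) ^ 2),
    integral_comp_mul_left (fun x => (k * cos x) ^ 2 - c * sin x ^ 2) hk0, sub_self, mul_zero, hk]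
  simp_rw [mul_pow]
  rw [intervalIntegral.integral_sub ((by fun_prop : Continuous _).intervalIntegrable _ _)
    ((by fun_prop : Continuous _).intervalIntegrable _ _), intervalIntegral.integral_const_mul,
    intervalIntegral.integral_const_mul, integral_cos_sq, integral_sin_sq, hba]
  simp only [sin_pi, cos_pi, sin_zero, cos_zero, smul_eq_mul]
  field_simp
  ring

/-- **Negativity of the second variation in the underdamped case on long intervals.**
If `β > 0`, `0 ≤ α < 2√β`, and `t₂ - t₁ > 2π/√(4β - α²)`, then there is an admissible `C¹`
perturbation `h` on `[t₁, t₂]` vanishing at both endpoints with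
`∫_{t₁}^{t₂} e^{αt}(ḣ² - βh²) dt < 0`. -/
theorem underdamped_second_variation_negative_long_interval
    (β α t₁ t₂ : ℝ) (hβ : 0 < β) (hα0 : 0 ≤ α) (hα : α < 2 * Real.sqrt β) (ht : t₁ < t₂)
    (hgap : t₂ - t₁ > 2 * Real.pi / Real.sqrt (4 * β - α ^ 2)) :
    ∃ h h' : ℝ → ℝ,
      (∀ t ∈ Icc t₁ t₂, HasDerivWithinAt h (h' t) (Icc t₁ t₂) t) ∧
      ContinuousOn h' (Icc t₁ t₂) ∧ h t₁ = 0 ∧ h t₂ = 0 ∧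
      (∫ t in t₁..t₂, Real.exp (α * t) * ((h' t) ^ 2 - β * (h t) ^ 2)) < 0 := by
  have hL : 0 < t₂ - t₁ := sub_pos.mpr ht
  have hω : 0 < 4 * β - α ^ 2 := by
    have := pow_lt_pow_left₀ hα hα0 two_ne_zero
    rw [mul_pow, sq_sqrt hβ.le] at this
    linarith
  set k := π / (t₂ - t₁) with hk_def
  have hkL : k * (t₂ - t₁) = π := div_mul_cancel₀ _ hL.ne'
  have hk_lt : k ^ 2 < β - α ^ 2 / 4 := by
    have hk2 : 2 * k < sqrt (4 * β - α ^ 2) := by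
      rw [gt_iff_lt, div_lt_iff₀ (sqrt_pos.mpr hω)] at hgap
      rw [hk_def, mul_div_assoc', div_lt_iff₀ hL]
      linarith
    nlinarith [sq_sqrt hω.le, (div_pos pi_pos hL).le]
  have hu : ∀ t, HasDerivAt (fun t => sin (k * (t - t₁))) (k * cos (k * (t - t₁))) t := fun t => by
    simpa [mul_comm] using (((hasDerivAt_id t).sub_const t₁).const_mul k).sin
  refine ⟨fun t => exp (-(α / 2) * t) * sin (k * (t - t₁)),
    fun t => exp (-(α / 2) * t) * (k * cos (k * (t - t₁)) - α / 2 * sin (k * (t - t₁))),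
    fun t _ => (hasDerivAt_exp_mul_liouville α (hu t)).hasDerivWithinAt, by fun_prop,
    by simp, by simp [hkL], ?_⟩
  rw [integral_exp_mul_sq_sub_sq_liouville α β (fun t _ => hu t) (by fun_prop)
    (by simp) (by simp [hkL]), integral_sq_deriv_sub_sq_sin_mode _ hkL]
  exact div_neg_of_neg_of_pos (mul_neg_of_neg_of_pos (by linarith) hL) two_pos
end

section
/- Let t₁ < t₂, set T = t₂ − t₁, let k be a positive integer, and define h : [t₁,t₂] → ℝ by h(t) = sin( kπ(t − t₁)/T ). Then ∫_{t₁}^{t₂} e^{t}( ḣ(t)² − h(t)² ) dt < 0 if and only if T > √2 · kπ. -/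
/-!
Write `ω = kπ/T` and `θ = ω (t - t₁)`. The double-angle formulas turn the integrand into
`eᵗ ((ω² - 1)/2 + (ω² + 1)/2 · cos 2θ)`, and since `2ωT = 2kπ` the antiderivative
`eᵗ (cos 2θ + 2ω sin 2θ) / (1 + 4ω²)` of `eᵗ cos 2θ` takes the same phase at both ends. The
integral is therefore `(e^{t₂} - e^{t₁}) ω² (2ω² - 1) / (1 + 4ω²)`, negative exactly when
`2ω² < 1`, i.e. when `T > √2 kπ`.
-/

open Real intervalIntegral

lemma hasDerivAt_exp_mul_cos_add_mul_sin (a c t : ℝ) :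
    HasDerivAt (fun t => exp t * (cos (c * (t - a)) + c * sin (c * (t - a))))
      ((1 + c ^ 2) * (exp t * cos (c * (t - a)))) t := by
  have hlin : HasDerivAt (fun t => c * (t - a)) c t := by
    simpa using ((hasDerivAt_id t).sub_const a).const_mul c
  refine ((hasDerivAt_exp t).fun_mul (hlin.cos.fun_add (hlin.sin.const_mul c))).congr_deriv ?_
  ring

lemma integral_exp_mul_cos (a b c : ℝ) :
    ∫ t in a..b, exp t * cos (c * (t - a)) =
      (exp b * (cos (c * (b - a)) + c * sin (c * (b - a))) - exp a) / (1 + c ^ 2) := by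
  have hc : 1 + c ^ 2 ≠ 0 := by positivity
  rw [eq_div_iff hc, mul_comm, ← integral_const_mul,
    integral_eq_sub_of_hasDerivAt (fun t _ => hasDerivAt_exp_mul_cos_add_mul_sin a c t)
      (by apply Continuous.intervalIntegrable; fun_prop)]
  simp

lemma mul_cos_sq_sub_sin_sq (ω θ : ℝ) :
    (ω * cos θ) ^ 2 - sin θ ^ 2 = (ω ^ 2 - 1) / 2 + (ω ^ 2 + 1) / 2 * cos (2 * θ) := by
  rw [mul_pow, sin_sq, cos_sq]
  ring

lemma integral_exp_mul_sq_mul_cos_sub_sq_sin {a b ω : ℝ} {n : ℤ}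
    (hω : ω * (b - a) = n * π) :
    ∫ t in a..b, exp t * ((ω * cos (ω * (t - a))) ^ 2 - sin (ω * (t - a)) ^ 2) =
      (exp b - exp a) * ω ^ 2 / (1 + 4 * ω ^ 2) * (2 * ω ^ 2 - 1) := by
  have hcos : cos (2 * ω * (b - a)) = 1 := by
    rw [mul_assoc, hω, ← cos_int_mul_two_pi n]; ring_nf
  have hsin : sin (2 * ω * (b - a)) = 0 := by
    rw [mul_assoc, hω, ← sin_int_mul_pi (2 * n)]; push_cast; ring_nf
  simp_rw [mul_cos_sq_sub_sin_sq, mul_add, ← mul_assoc (2 : ℝ), mul_left_comm (exp _)]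
  rw [integral_add, integral_const_mul, integral_mul_const, integral_exp,
    integral_exp_mul_cos, hcos, hsin]
  · field_simp
    ring
  all_goals apply Continuous.intervalIntegrable; fun_prop

lemma two_mul_div_sq_lt_one_iff {x T : ℝ} (hx : 0 ≤ x) (hT : 0 < T) :
    2 * (x / T) ^ 2 < 1 ↔ √2 * x < T := by
  rw [div_pow, ← mul_div_assoc, div_lt_one (by positivity), ← sqrt_lt' hT, sqrt_mul zero_le_two,
    sqrt_sq hx]

/-- **Sign of the second variation at a sine perturbation (case `α = β = 1`).**
For `h(t) = sin(kπ(t - t₁)/T)` with `T = t₂ - t₁` and `k` a positive integer, the second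
variation integral `∫_{t₁}^{t₂} e^t (ḣ² - h²) dt` is negative if and only if `T > √2·kπ`. -/
theorem sine_perturbation_second_variation_neg_iff
    (t₁ t₂ : ℝ) (ht : t₁ < t₂) (k : ℕ) (hk : 0 < k) :
    (∫ t in t₁..t₂, Real.exp t *
        ((k * Real.pi / (t₂ - t₁) * Real.cos (k * Real.pi * (t - t₁) / (t₂ - t₁))) ^ 2
          - (Real.sin (k * Real.pi * (t - t₁) / (t₂ - t₁))) ^ 2)) < 0
      ↔ t₂ - t₁ > Real.sqrt 2 * k * Real.pi := by
  have hT : 0 < t₂ - t₁ := sub_pos.mpr ht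
  set ω := k * π / (t₂ - t₁) with hω
  have hphase (t : ℝ) : k * π * (t - t₁) / (t₂ - t₁) = ω * (t - t₁) := by ring
  have hperiod : ω * (t₂ - t₁) = (k : ℤ) * π := by simp [hω, hT.ne']
  have hω_pos : 0 < ω := by positivity
  have hcoef : 0 < (exp t₂ - exp t₁) * ω ^ 2 / (1 + 4 * ω ^ 2) := by
    have : 0 < exp t₂ - exp t₁ := sub_pos.mpr (exp_lt_exp.mpr ht)
    positivity
  simp_rw [hphase]
  rw [integral_exp_mul_sq_mul_cos_sub_sq_sin hperiod, ← not_le,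
    mul_nonneg_iff_of_pos_left hcoef, not_le, sub_neg, hω, two_mul_div_sq_lt_one_iff (by positivity) hT, mul_assoc, gt_iff_lt]
end

section
/- Let β > 0 and t₁ > 0. There exists T > 0 such that for every t₂ with t₁ < t₂ ≤ t₁ + T and every continuously differentiable function h : [t₁,t₂] → ℝ with h(t₁) = h(t₂) = 0, one has ∫_{t₁}^{t₂} t³( ḣ(t)² − β h(t)² ) dt ≥ 0. -/
/-! Since `h t₁ = 0`, the fundamental theorem of calculus and Cauchy–Schwarz give
`h(t)² ≤ (t₂ - t₁) ∫ ḣ²` on `[t₁, t₂]`. Hence the potential term `∫ t³ β h²` is at most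
`β t₂³ (t₂ - t₁)² ∫ ḣ²`, while the kinetic term `∫ t³ ḣ²` is at least `t₁³ ∫ ḣ²`; the latter
wins as soon as `β t₂³ (t₂ - t₁)² ≤ t₁³`, which holds on short intervals. -/

open Set intervalIntegral
open MeasureTheory (volume)

theorem sq_intervalIntegral_le_mul_intervalIntegral_sq {f : ℝ → ℝ} {a b : ℝ} (hab : a ≤ b)
    (hf : IntervalIntegrable f volume a b)
    (hf2 : IntervalIntegrable (fun t => f t ^ 2) volume a b) :
    (∫ t in a..b, f t) ^ 2 ≤ (b - a) * ∫ t in a..b, f t ^ 2 := by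
  -- `x ↦ ∫ (x f - 1)²` is a nonnegative quadratic polynomial, so its discriminant is `≤ 0`.
  have hquad : ∀ x : ℝ, 0 ≤ (∫ t in a..b, f t ^ 2) * (x * x) + (-2 * ∫ t in a..b, f t) * x
      + (b - a) := by
    intro x
    have hint : ∫ t in a..b, (x * f t - 1) ^ 2
        = (∫ t in a..b, f t ^ 2) * (x * x) + (-2 * ∫ t in a..b, f t) * x + (b - a) := by
      have hexp : (fun t => (x * f t - 1) ^ 2)
          = fun t => (x * x) * f t ^ 2 - (2 * x) * f t + 1 := by
        ext t; ring
      rw [hexp, integral_add ((hf2.const_mul _).sub (hf.const_mul _)) intervalIntegrable_const,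
        integral_sub (hf2.const_mul _) (hf.const_mul _), integral_const_mul, integral_const_mul,
        integral_const, smul_eq_mul]
      ring
    rw [← hint]
    exact integral_nonneg hab fun t _ => sq_nonneg _
  have := discrim_le_zero hquad
  rw [discrim] at this
  nlinarith

section Perturbation

variable {h h' : ℝ → ℝ} {a b : ℝ}

theorem eq_intervalIntegral_of_hasDerivWithinAt_Icc
    (hderiv : ∀ t ∈ Icc a b, HasDerivWithinAt h (h' t) (Icc a b) t)
    (hcont : ContinuousOn h' (Icc a b)) (ha : h a = 0) {t : ℝ} (ht : t ∈ Icc a b) :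
    h t = ∫ s in a..t, h' s := by
  have hsub : Icc a t ⊆ Icc a b := Icc_subset_Icc le_rfl ht.2
  rw [integral_eq_sub_of_hasDerivAt_of_le ht.1
    (fun s hs => (hderiv s (hsub hs)).continuousWithinAt.mono hsub)
    (fun s hs => (hderiv s (hsub (Ioo_subset_Icc_self hs))).hasDerivAt
      (Icc_mem_nhds hs.1 (hs.2.trans_le ht.2)))
    ((hcont.mono hsub).intervalIntegrable_of_Icc ht.1), ha, sub_zero]

theorem sq_le_mul_intervalIntegral_deriv_sq
    (hderiv : ∀ t ∈ Icc a b, HasDerivWithinAt h (h' t) (Icc a b) t)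
    (hcont : ContinuousOn h' (Icc a b)) (ha : h a = 0) {t : ℝ} (ht : t ∈ Icc a b) :
    h t ^ 2 ≤ (b - a) * ∫ s in a..b, h' s ^ 2 := by
  have hsub : Icc a t ⊆ Icc a b := Icc_subset_Icc le_rfl ht.2
  have hab : a ≤ b := ht.1.trans ht.2
  calc h t ^ 2 = (∫ s in a..t, h' s) ^ 2 := by
        rw [eq_intervalIntegral_of_hasDerivWithinAt_Icc hderiv hcont ha ht]
    _ ≤ (t - a) * ∫ s in a..t, h' s ^ 2 :=
        sq_intervalIntegral_le_mul_intervalIntegral_sq ht.1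
          ((hcont.mono hsub).intervalIntegrable_of_Icc ht.1)
          (((hcont.mono hsub).pow 2).intervalIntegrable_of_Icc ht.1)
    _ ≤ (b - a) * ∫ s in a..b, h' s ^ 2 := by
        gcongr
        · exact integral_nonneg ht.1 fun s _ => sq_nonneg _
        · linarith [ht.2]
        · exact integral_mono_interval le_rfl ht.1 ht.2
            (Filter.Eventually.of_forall fun s => sq_nonneg _)
            ((hcont.pow 2).intervalIntegrable_of_Icc hab)

theorem le_intervalIntegral_weight_mul_deriv_sq_sub_sq {w : ℝ → ℝ} {β m M : ℝ} (hab : a ≤ b)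
    (hβ : 0 ≤ β) (hM : 0 ≤ M) (hw : ∀ t ∈ Icc a b, m ≤ w t ∧ w t ≤ M)
    (hwc : ContinuousOn w (Icc a b))
    (hderiv : ∀ t ∈ Icc a b, HasDerivWithinAt h (h' t) (Icc a b) t)
    (hcont : ContinuousOn h' (Icc a b)) (ha : h a = 0) :
    (m - β * M * (b - a) ^ 2) * ∫ t in a..b, h' t ^ 2
      ≤ ∫ t in a..b, w t * (h' t ^ 2 - β * h t ^ 2) := by
  set I := ∫ t in a..b, h' t ^ 2
  have hh : ContinuousOn h (Icc a b) := fun t ht => (hderiv t ht).continuousWithinAt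
  have hsq : IntervalIntegrable (fun t => h' t ^ 2) volume a b :=
    (hcont.pow 2).intervalIntegrable_of_Icc hab
  have hpointwise : ∀ t ∈ Icc a b,
      m * h' t ^ 2 - β * M * (b - a) * I ≤ w t * (h' t ^ 2 - β * h t ^ 2) := by
    intro t ht
    obtain ⟨hmw, hwM⟩ := hw t ht
    have hwh : w t * h t ^ 2 ≤ M * ((b - a) * I) :=
      mul_le_mul hwM (sq_le_mul_intervalIntegral_deriv_sq hderiv hcont ha ht) (sq_nonneg _) hM
    nlinarith [mul_le_mul_of_nonneg_right hmw (sq_nonneg (h' t))]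
  calc (m - β * M * (b - a) ^ 2) * I
      = ∫ t in a..b, (m * h' t ^ 2 - β * M * (b - a) * I) := by
        rw [integral_sub (hsq.const_mul _) intervalIntegrable_const, integral_const_mul,
          integral_const, smul_eq_mul]
        ring
    _ ≤ ∫ t in a..b, w t * (h' t ^ 2 - β * h t ^ 2) :=
        integral_mono_on hab ((hsq.const_mul _).sub intervalIntegrable_const)
          ((hwc.mul ((hcont.pow 2).sub (continuousOn_const.mul (hh.pow 2))))
            |>.intervalIntegrable_of_Icc hab)
          hpointwise

end Perturbation

/-- **Positive semidefiniteness of the second variation on short intervals** (vanishing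
damping `3/t`, scalar quadratic loss `f(x) = βx²/2`).  For every `β > 0` and `t₁ > 0` there
is `T > 0` such that for every `t₂` with `t₁ < t₂ ≤ t₁ + T` and every admissible `C¹`
perturbation `h` on `[t₁, t₂]` vanishing at both endpoints,
`∫_{t₁}^{t₂} t³(ḣ² - βh²) dt ≥ 0`. -/
theorem vanishing_damping_second_variation_nonneg_short_interval
    (β t₁ : ℝ) (hβ : 0 < β) (ht₁ : 0 < t₁) :
    ∃ T > (0 : ℝ), ∀ t₂ : ℝ, t₁ < t₂ → t₂ ≤ t₁ + T →
      ∀ h h' : ℝ → ℝ,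
        (∀ t ∈ Icc t₁ t₂, HasDerivWithinAt h (h' t) (Icc t₁ t₂) t) →
        ContinuousOn h' (Icc t₁ t₂) → h t₁ = 0 → h t₂ = 0 →
        0 ≤ ∫ t in t₁..t₂, t ^ 3 * ((h' t) ^ 2 - β * (h t) ^ 2) := by
  set c := t₁ ^ 3 / (β * (t₁ + 1) ^ 3)
  have hc : 0 < c := by positivity
  refine ⟨min 1 c, lt_min one_pos hc, fun t₂ h12 hT h h' hderiv hcont ha _ => ?_⟩
  have hL1 : t₂ - t₁ ≤ 1 := by linarith [min_le_left 1 c]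
  have hL2 : (t₂ - t₁) ^ 2 ≤ c := by nlinarith [min_le_right 1 c]
  have hshort : β * t₂ ^ 3 * (t₂ - t₁) ^ 2 ≤ t₁ ^ 3 :=
    calc β * t₂ ^ 3 * (t₂ - t₁) ^ 2 ≤ β * (t₁ + 1) ^ 3 * c := by
          gcongr <;> linarith
      _ = t₁ ^ 3 := by simp only [c]; field_simp
  refine le_trans ?_ (le_intervalIntegral_weight_mul_deriv_sq_sub_sq h12.le hβ.le
    (pow_nonneg (by linarith) 3) (fun t ht => ⟨pow_le_pow_left₀ ht₁.le ht.1 3,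
      pow_le_pow_left₀ (ht₁.le.trans ht.1) ht.2 3⟩) (continuousOn_pow 3) hderiv hcont ha)
  exact mul_nonneg (by linarith) (integral_nonneg h12.le fun t _ => sq_nonneg _)
end
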